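/- Let p be a prime, K a field of characteristic p, D a derivation on K whose p-th iterate is the zero map (D^p = 0), and y ∈ K. Suppose f₀ ∈ K satisfies the p-Riccati equation D^{p-1}(f₀) + f₀^p = y. Then the full solution set of this equation is obtained from f₀ by adding logarithmic derivatives: for f ∈ K, D^{p-1}(f) + f^p = y if and only if there exists g ∈ K, g ≠ 0, with f = f₀ + D(g)/g. -/

import Mathlib

/-!
For `c ∈ K` let `T_c = c + D` be the additive operator `u ↦ c u + D u`. Jacobson's formula for
`(a + d)^p` in characteristic `p`, applied to `a` = multiplication by `c` and `d = D` (whose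
iterated commutators with `a` are multiplications by `D^k c`, hence commute with `a`), gives
`T_c^p = (D^{p-1} c + c^p) + D^p`. If `c = D g / g` then `T_c = g⁻¹ D g` is conjugate to `D`,
so `T_c^p = g⁻¹ D^p g = 0` and `c` solves the homogeneous equation. Conversely, if `c` solves it,
then `T_c^p = 0`, so `T_c h = 0` for some `h ≠ 0`, i.e. `c = D(h⁻¹)/h⁻¹`. Since the `p`-Riccati
operator `f ↦ D^{p-1} f + f^p` is additive, this describes all solutions.
-/

open Polynomial Finset

section Jacobson

variable {S : Type*} [Ring S]

theorem CharP.cast_choose_pred_eq_neg_one_pow {p : ℕ} [hp : Fact p.Prime] [CharP S p] {k : ℕ}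
    (hk : k < p) : (((p - 1).choose k : ℕ) : S) = (-1) ^ k := by
  induction k with
  | zero => simp
  | succ k ih =>
    have hpascal : (p - 1).choose k + (p - 1).choose (k + 1) = p.choose (k + 1) := by
      rw [← Nat.choose_succ_succ', Nat.sub_add_cancel hp.out.one_le]
    have hzero : ((p.choose (k + 1) : ℕ) : S) = 0 :=
      (CharP.cast_eq_zero_iff S p _).2 (hp.out.dvd_choose_self k.succ_ne_zero hk)
    rw [← hpascal, Nat.cast_add, ih (by omega)] at hzero
    rw [pow_succ, mul_neg_one, eq_neg_of_add_eq_zero_right hzero]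

theorem CharP.iterate_commutator_pred_eq_sum {p : ℕ} [hp : Fact p.Prime] [CharP S p] (x a : S) :
    (fun y => x * y - y * x)^[p - 1] a = ∑ k ∈ range p, x ^ (p - 1 - k) * a * x ^ k := by
  have hcomm : Commute (LinearMap.mulRight ℤ (-x)) (LinearMap.mulLeft ℤ x) :=
    (LinearMap.commute_mulLeft_right x (-x)).symm
  have hsplit : (fun y => x * y - y * x) =
      ⇑(LinearMap.mulRight ℤ (-x) + LinearMap.mulLeft ℤ x) := by
    ext y
    simp [sub_eq_neg_add]
  rw [hsplit, ← Module.End.pow_apply, hcomm.add_pow, Nat.sub_add_cancel hp.out.one_le,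
    LinearMap.sum_apply]
  refine sum_congr rfl fun k hk => ?_
  simp only [Module.End.mul_apply, LinearMap.pow_mulLeft, LinearMap.pow_mulRight,
    Module.End.natCast_apply, LinearMap.mulLeft_apply, LinearMap.mulRight_apply, nsmul_eq_mul,
    cast_choose_pred_eq_neg_one_pow (mem_range.1 hk), neg_pow x, ← mul_assoc]
  rw [mul_assoc _ a, ← ((Commute.neg_one_left a).pow_left k).eq, mul_assoc (x ^ _),
    ← mul_assoc ((-1) ^ k), ← pow_add, Even.neg_one_pow ⟨k, rfl⟩, one_mul]

theorem Polynomial.derivative_pow_eq_sum {R : Type*} [Semiring R] (f : R[X]) (n : ℕ) :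
    derivative (f ^ n) = ∑ k ∈ range n, f ^ (n - 1 - k) * derivative f * f ^ k := by
  induction n with
  | zero => simp
  | succ n ih =>
    rw [pow_succ, derivative_mul, ih, sum_mul, sum_range_succ' _ n]
    simp only [mul_assoc, ← pow_succ, Nat.add_sub_cancel, Nat.sub_zero, pow_zero, mul_one,
      Nat.sub_sub, Nat.add_comm 1]

theorem Polynomial.derivative_pow_char {p : ℕ} [Fact p.Prime] [CharP S p] (f : S[X]) :
    derivative (f ^ p) = (fun g => f * g - g * f)^[p - 1] (derivative f) := by
  rw [derivative_pow_eq_sum, CharP.iterate_commutator_pred_eq_sum]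

theorem Polynomial.eq_of_derivative_eq_C_of_natDegree_le_char {p : ℕ} [hp : Fact p.Prime]
    [CharP S p] {F : S[X]} (hdeg : F.natDegree ≤ p) {b : S} (hF : derivative F = C b) :
    F = C (F.coeff 0) + C b * X + C (F.coeff p) * X ^ p := by
  have hcoeff (n : ℕ) : F.coeff (n + 1) * (n + 1 : ℕ) = if n = 0 then b else 0 := by
    rw [Nat.cast_succ, ← coeff_derivative, hF, coeff_C]
  ext n
  simp only [coeff_add, coeff_C, coeff_C_mul_X, coeff_C_mul_X_pow]
  by_cases h0 : n = 0
  · subst h0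
    simp [hp.out.ne_zero.symm]
  by_cases h1 : n = 1
  · subst h1
    simpa [hp.out.ne_one.symm] using hcoeff 0
  by_cases hnp : n = p
  · subst hnp
    simp [h0, h1]
  simp only [if_neg h0, if_neg h1, if_neg hnp, add_zero]
  rcases lt_or_gt_of_ne hnp with hlt | hgt
  · obtain ⟨m, rfl⟩ := Nat.exists_eq_succ_of_ne_zero h0
    have hunit : IsUnit ((m + 1 : ℕ) : S) :=
      (CharP.isUnit_natCast_iff hp.out).2 (Nat.not_dvd_of_pos_of_lt m.succ_pos hlt)
    exact hunit.mul_left_eq_zero.1 ((hcoeff m).trans (if_neg (by omega)))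
  · exact coeff_eq_zero_of_natDegree_lt (hdeg.trans_lt hgt)

/- Jacobson's formula. The derivative in `X` of `(a X + d)^p` is the constant
`ad(d)^{p-1}(a)`, so only the coefficients of `1`, `X` and `X^p` survive; then set `X = 1`. -/
theorem add_pow_char_of_commute_iterate_commutator {p : ℕ} [Fact p.Prime] [CharP S p]
    (a d : S) (h : ∀ k, Commute a ((fun x => d * x - x * d)^[k] a)) :
    (a + d) ^ p = a ^ p + d ^ p + (fun x => d * x - x * d)^[p - 1] a := by
  set Q : S[X] := C a * X + C d
  have hQ : Q.natDegree ≤ 1 := natDegree_linear_le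
  have hcommutator {u : S} (hu : Commute a u) : Q * C u - C u * Q = C (d * u - u * d) := by
    simp only [Q, add_mul, mul_add, mul_assoc, X_mul_C, ← mul_assoc (C u), ← C_mul]
    rw [← mul_assoc, ← C_mul, hu.eq, C_sub]
    abel
  have hiter (k : ℕ) :
      (fun g => Q * g - g * Q)^[k] (C a) = C ((fun x => d * x - x * d)^[k] a) := by
    induction k with
    | zero => rfl
    | succ k ih =>
      rw [Function.iterate_succ_apply', Function.iterate_succ_apply', ih, hcommutator (h k)]
  have hderiv : derivative (Q ^ p) = C ((fun x => d * x - x * d)^[p - 1] a) := by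
    rw [derivative_pow_char, ← hiter]
    simp [Q]
  have hshape := eq_of_derivative_eq_C_of_natDegree_le_char
    ((natDegree_pow_le_of_le p hQ).trans (mul_one p).le) hderiv
  have hlead : (Q ^ p).coeff p = a ^ p := by
    simpa [Q] using coeff_pow_of_natDegree_le (m := p) hQ
  have hconst : (Q ^ p).coeff 0 = d ^ p := by
    simpa [Q] using map_pow (constantCoeff (R := S)) Q p
  rw [hlead, hconst] at hshape
  let φ : S[X] →+* S := eval₂RingHom' (RingHom.id S) 1 fun _ => Commute.one_right _
  have hφC (u : S) : φ (C u) = u := eval₂_C _ _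
  have hφX : φ X = 1 := eval₂_X _ _
  calc (a + d) ^ p = φ Q ^ p := by simp only [Q, map_add, map_mul, hφC, hφX, mul_one]
    _ = φ (Q ^ p) := (map_pow φ Q p).symm
    _ = _ := by
      rw [hshape]
      simp only [map_add, map_mul, map_pow, hφC, hφX, one_pow, mul_one]
      abel

end Jacobson

theorem Module.End.exists_ne_zero_apply_eq_zero_of_pow_eq_zero {R M : Type*} [Semiring R]
    [AddCommGroup M] [Module R M] [Nontrivial M] {T : Module.End R M} {n : ℕ}
    (hT : T ^ n = 0) : ∃ v ≠ 0, T v = 0 := by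
  by_contra! h
  have hinj : Function.Injective T :=
    (injective_iff_map_eq_zero T).2 fun v hv => by_contra fun hne => h v hne hv
  obtain ⟨v, hv⟩ := exists_ne (0 : M)
  exact hv (hinj.iterate n (by rw [← Module.End.pow_apply, hT, iterate_map_zero]; rfl))

section pRiccati

variable {R K : Type*} [CommRing R] [Field K] [Algebra R K]

def pRiccati (p : ℕ) (D : K → K) (f : K) : K := D^[p - 1] f + f ^ p

variable (δ : Derivation R K K)

theorem Derivation.pRiccati_sub {p : ℕ} [Fact p.Prime] [CharP K p] (f f₀ : K) :
    pRiccati p δ (f - f₀) = pRiccati p δ f - pRiccati p δ f₀ := by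
  simp only [pRiccati, iterate_map_sub δ, sub_pow_char]
  abel

theorem Derivation.commutator_lmul (u : K) :
    (δ : Module.End R K) * Algebra.lmul R K u - Algebra.lmul R K u * δ =
      Algebra.lmul R K (δ u) := by
  ext v
  simp [Derivation.leibniz]
  ring

theorem Derivation.lmul_add_pow_char {p : ℕ} [Fact p.Prime] [CharP K p] (c : K) :
    (Algebra.lmul R K c + δ) ^ p =
      Algebra.lmul R K (pRiccati p δ c) + (δ : Module.End R K) ^ p := by
  have : CharP (Module.End R K) p :=
    charP_of_injective_ringHom (f := (Algebra.lmul R K).toRingHom) Algebra.lmul_injective p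
  have hiter (k : ℕ) : (fun x => (δ : Module.End R K) * x - x * δ)^[k] (Algebra.lmul R K c) =
      Algebra.lmul R K (δ^[k] c) := by
    induction k with
    | zero => rfl
    | succ k ih =>
      rw [Function.iterate_succ_apply', Function.iterate_succ_apply', ih, δ.commutator_lmul]
  have hcomm (k : ℕ) : Commute (Algebra.lmul R K c)
      ((fun x => (δ : Module.End R K) * x - x * δ)^[k] (Algebra.lmul R K c)) := by
    rw [hiter]
    exact (Commute.all _ _).map _
  rw [add_pow_char_of_commute_iterate_commutator _ _ hcomm, hiter, pRiccati, map_add, map_pow]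
  abel

theorem Derivation.lmul_logDeriv_add_eq_conj {g : K} (hg : g ≠ 0) :
    Algebra.lmul R K (δ g / g) + δ = Algebra.lmul R K g⁻¹ * δ * Algebra.lmul R K g := by
  ext v
  simp [Derivation.leibniz]
  field_simp
  ring

theorem Derivation.pRiccati_logDeriv {p : ℕ} [hp : Fact p.Prime] [CharP K p] {g : K}
    (hg : g ≠ 0) : pRiccati p δ (δ g / g) = δ^[p] g / g := by
  have hconj : (Algebra.lmul R K g⁻¹ * δ * Algebra.lmul R K g) ^ p =
      Algebra.lmul R K g⁻¹ * (δ : Module.End R K) ^ p * Algebra.lmul R K g :=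
    Units.conj_pow' (Units.map (Algebra.lmul R K).toMonoidHom (Units.mk0 g hg)) _ p
  have hone : δ^[p] 1 = 0 := by
    rw [← Nat.sub_add_cancel hp.out.one_le, Function.iterate_succ_apply, δ.map_one_eq_zero,
      iterate_map_zero]
  have h := congrArg (fun T : Module.End R K => T 1) (δ.lmul_add_pow_char (δ g / g))
  rw [δ.lmul_logDeriv_add_eq_conj hg, hconj] at h
  simp only [Module.End.mul_apply, LinearMap.add_apply, Module.End.pow_apply,
    Algebra.coe_lmul_eq_mul, LinearMap.mul_apply', Derivation.coeFn_coe, mul_one, hone,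
    add_zero] at h
  rw [← h, inv_mul_eq_div]

theorem Derivation.exists_logDeriv_of_pRiccati_eq_zero {p : ℕ} [Fact p.Prime] [CharP K p]
    (hδ : ∀ a, δ^[p] a = 0) {c : K} (hc : pRiccati p δ c = 0) : ∃ g ≠ 0, c = δ g / g := by
  have hδp : (δ : Module.End R K) ^ p = 0 :=
    LinearMap.ext fun a => (Module.End.pow_apply _ p a).trans (hδ a)
  obtain ⟨h, hh, hker⟩ := Module.End.exists_ne_zero_apply_eq_zero_of_pow_eq_zero
    (T := Algebra.lmul R K c + (δ : Module.End R K)) (n := p)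
    (by rw [δ.lmul_add_pow_char, hc, hδp, map_zero, add_zero])
  refine ⟨h⁻¹, inv_ne_zero hh, ?_⟩
  simp only [LinearMap.add_apply, Algebra.coe_lmul_eq_mul, LinearMap.mul_apply',
    Derivation.coeFn_coe] at hker
  rw [δ.leibniz_inv, smul_eq_mul]
  field_simp
  linear_combination hker

end pRiccati

/-- Let `p` be a prime, `K` a field of characteristic `p`, `D` a derivation on `K`
(an additive map satisfying the Leibniz rule) with `D^p = 0`, and `y ∈ K`. If
`f₀ ∈ K` is a solution of the `p`-Riccati equation `D^{p-1}(f₀) + f₀^p = y`, then the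
full solution set is obtained from `f₀` by adding logarithmic derivatives: for `f ∈ K`,
`D^{p-1}(f) + f^p = y` if and only if `f = f₀ + D(g)/g` for some nonzero `g ∈ K`. -/
theorem pRiccati_solutions_from_particular
    (p : ℕ) (hp : p.Prime) (K : Type*) [Field K] [CharP K p]
    (D : K → K)
    (hadd : ∀ u v : K, D (u + v) = D u + D v)
    (hleib : ∀ u v : K, D (u * v) = u * D v + v * D u)
    (hDp : ∀ a : K, D^[p] a = 0)
    (y f₀ : K) (hf₀ : D^[p - 1] f₀ + f₀ ^ p = y)
    (f : K) :
    D^[p - 1] f + f ^ p = y ↔ ∃ g : K, g ≠ 0 ∧ f = f₀ + D g / g := by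
  have : Fact p.Prime := ⟨hp⟩
  obtain ⟨δ, rfl⟩ : ∃ δ : Derivation ℤ K K, ⇑δ = D :=
    ⟨Derivation.mk' (AddMonoidHom.mk' D hadd).toIntLinearMap hleib, rfl⟩
  rw [← pRiccati, ← sub_eq_zero, ← hf₀, ← pRiccati, ← δ.pRiccati_sub]
  constructor
  · intro hc
    obtain ⟨g, hg, hfg⟩ := δ.exists_logDeriv_of_pRiccati_eq_zero hDp hc
    exact ⟨g, hg, by rw [← hfg, add_sub_cancel]⟩
  · rintro ⟨g, hg, rfl⟩
    rw [add_sub_cancel_left, δ.pRiccati_logDeriv hg]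
    exact div_eq_zero_iff.2 (Or.inl (hDp g))
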